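/- For a supercritical BPRE with p₀(ξ₀) = 0 a.s. and ℙ(Z₁ = 1 | Z₀ = 1) > 0, fix k ≥ 1 and r > 0. Then, as identities in [0, ∞], Σ_{j=k}^∞ j^{−r} · q_{k,j} = lim_{n→∞} ↑ 𝔼_k[Zₙ^{−r}]/γ_k^n, where the sequence 𝔼_k[Zₙ^{−r}]/γ_k^n is nondecreasing in n. -/

import Mathlib

/-!
Since `p₀ = 0`, the population never decreases, so `ℙ_k(Z_n = j) = 0` for `j < k`. Staying at
`k` during the first generation and then moving from `k` to `j` in `n` steps gives, by the
independence and stationarity of the environment, `γ_k ℙ_k(Z_n = j) ≤ ℙ_k(Z_{n+1} = j)`. Hence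
every term of `𝔼_k[Z_n^{-r}] / γ_k^n = ∑_j j^{-r} ℙ_k(Z_n = j) / γ_k^n` is nondecreasing in `n`,
and monotone convergence for series lets the limit pass through the sum.
-/

open MeasureTheory ProbabilityTheory Filter
open scoped ENNReal Topology ProbabilityTheory

noncomputable section

/-- `convPow p i e j` is the probability that a sum of `i` i.i.d. random variables,
each distributed according to the offspring law `p · e`, equals `j`;
i.e. the `i`-fold convolution of the offspring law determined by the environment
value `e`.  Thus `convPow p i e` is the quenched one-step transition law of a
branching process from state `i` under the environment value `e`. -/
def convPow {E : Type*} (p : ℕ → E → ℝ) : ℕ → E → ℕ → ℝ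
  | 0, _, j => if j = 0 then 1 else 0
  | i + 1, e, j => ∑ l ∈ Finset.range (j + 1), convPow p i e l * p (j - l) e

/-- The canonical filtration on the trajectory space `ℕ → ℕ`:
`trajFiltration n` is the σ-algebra generated by the coordinates `0, …, n`. -/
def trajFiltration (n : ℕ) : MeasurableSpace (ℕ → ℕ) :=
  ⨆ i ∈ Finset.range (n + 1), MeasurableSpace.comap (fun z : ℕ → ℕ => z i) ⊤

/-- A branching process in an i.i.d. random environment (BPRE).
The environment is a sequence of i.i.d. random variables with values in `E`
(its law is the measure `μenv` on the sequence space), each value `e : E`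
determining an offspring law `p · e` (i.e. a generating function
`f(e, t) = ∑ pᵢ(e) tⁱ`).  `K k` is the quenched law of the whole trajectory
`(Z_n)_{n ≥ 0}` of the branching process starting from `Z_0 = k`, given the
environment sequence: under `K k e`, `(Z_n)` starts at `k` and its one-step
conditional transition laws are the convolution powers `convPow p (Z_n) (e n)`
of the offspring laws — which is exactly the law of the process
`Z_{n+1} = ∑_{i=1}^{Z_n} N_{n,i}` where, conditionally on the environment, the
`N_{n,i}` (i ≥ 1) are i.i.d. with generating function `f(e n, ·)` and
independent of `Z_n`. -/
structure BPRE (E : Type*) [MeasurableSpace E] where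
  /-- the offspring distributions determined by an environment value -/
  p : ℕ → E → ℝ
  p_meas : ∀ i, Measurable (p i)
  p_nonneg : ∀ i e, 0 ≤ p i e
  p_tsum : ∀ e, ∑' i, p i e = 1
  /-- quenched law of the trajectory of `(Z_n)` with `Z_0 = k`, given the environment -/
  K : ℕ → Kernel (ℕ → E) (ℕ → ℕ)
  K_markov : ∀ k, IsMarkovKernel (K k)
  K_zero : ∀ k e, K k e {z | z 0 = k} = 1
  K_step : ∀ k e n j (A : Set (ℕ → ℕ)), MeasurableSet[trajFiltration n] A →
    K k e ({z | z (n + 1) = j} ∩ A)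
      = ∫⁻ z in A, ENNReal.ofReal (convPow p (z n) (e n) j) ∂(K k e)
  /-- the law of the i.i.d. environment sequence `ξ = (ξ₀, ξ₁, …)` -/
  μenv : Measure (ℕ → E)
  μenv_prob : IsProbabilityMeasure μenv
  μenv_iid : iIndepFun (fun n (e : ℕ → E) => e n) μenv
  μenv_ident : ∀ n, Measure.map (fun e : ℕ → E => e n) μenv
      = Measure.map (fun e : ℕ → E => e 0) μenv

namespace BPRE

variable {E : Type*} [MeasurableSpace E] (b : BPRE E)

/-- The law `ν` (that of `ξ₀`) of one environment component. -/
def ν : Measure E := b.μenv.map fun e => e 0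

/-- `m e` : the mean number of offspring `m₀ = ∑ i pᵢ(e)` of one individual under the
environment value `e`. -/
def m (e : E) : ℝ := ∑' i : ℕ, (i : ℝ) * b.p i e

/-- `Π_n = m₀ ⋯ m_{n-1}` along the environment sequence `e`. -/
def PiEnv (n : ℕ) (e : ℕ → E) : ℝ := ∏ j ∈ Finset.range n, b.m (e j)

/-- The annealed law `ℙ_k` of the pair (environment, trajectory) when `Z_0 = k`. -/
def P (k : ℕ) : Measure ((ℕ → E) × (ℕ → ℕ)) :=
  haveI := b.μenv_prob
  haveI := b.K_markov k
  Measure.compProd b.μenv (b.K k)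

/-- The annealed probability `ℙ_k (Z_n = j)`. -/
def probZ (k n j : ℕ) : ℝ := (b.P k {ω | ω.2 n = j}).toReal

/-- `γ_k = ℙ_k(Z_1 = k) = 𝔼[p₁(ξ₀)^k]`. -/
def γ (k : ℕ) : ℝ := ∫ e, b.p 1 (e 0) ^ k ∂b.μenv

/-- The normalized population limit `W = lim_n Z_n / Π_n` (defined via `limsup`, which
agrees a.s. with the limit of the nonnegative martingale `W_n = Z_n / Π_n`). -/
def W (ω : (ℕ → E) × (ℕ → ℕ)) : ℝ :=
  limsup (fun n => (ω.2 n : ℝ) / b.PiEnv n ω.1) atTop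

/-- The quenched limit variable `W` under a fixed environment sequence `e`. -/
def Wq (e : ℕ → E) (z : ℕ → ℕ) : ℝ :=
  limsup (fun n => (z n : ℝ) / b.PiEnv n e) atTop

/-- The quenched Laplace transform `φ_ξ(t) = 𝔼_ξ[e^{-tW}]` (with `Z_0 = 1`). -/
def phiq (e : ℕ → E) (t : ℝ) : ℝ := ∫ z, Real.exp (-t * b.Wq e z) ∂(b.K 1 e)

/-- The annealed Laplace transform `φ_k(t) = 𝔼_k[e^{-tW}]` (with `Z_0 = k`). -/
def phi (k : ℕ) (t : ℝ) : ℝ := ∫ ω, Real.exp (-t * b.W ω) ∂(b.P k)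

/-- Standing assumptions: the process is supercritical (`𝔼 log m₀ ∈ (0,∞)`) and each
individual gives birth to at least one child (`p₀(ξ₀) = 0` a.s.). -/
def Standing : Prop :=
  Integrable (fun e : ℕ → E => Real.log (b.m (e 0))) b.μenv ∧
  (0 < ∫ e, Real.log (b.m (e 0)) ∂b.μenv) ∧
  (∀ᵐ e ∂b.μenv, b.p 0 (e 0) = 0)

/-- The moment assumption `𝔼[(Z₁/m₀) log⁺ Z₁] < ∞`, which ensures `W_n → W` in
`L¹(ℙ)` and `ℙ(W > 0) = 1`. -/
def ZlogZ : Prop :=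
  Integrable (fun ω : (ℕ → E) × (ℕ → ℕ) =>
    ((ω.2 1 : ℝ) / b.m (ω.1 0)) * Real.log (max ((ω.2 1 : ℝ)) 1)) (b.P 1)

end BPRE

section ConvPow

variable {E : Type*} (p : ℕ → E → ℝ)

lemma convPow_one (x : E) (j : ℕ) : convPow p 1 x j = p j x := by
  rw [convPow, Finset.sum_eq_single 0 (fun l _ hl => by simp [convPow, hl]) (by simp)]
  simp [convPow]

variable {p}

lemma convPow_eq_zero_of_lt {x : E} (hp0 : p 0 x = 0) {i j : ℕ} (hji : j < i) :
    convPow p i x j = 0 := by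
  induction i generalizing j with
  | zero => omega
  | succ i ih =>
    refine Finset.sum_eq_zero fun l hl => ?_
    rcases lt_or_ge l i with hli | hil
    · rw [ih hli, zero_mul]
    · obtain rfl : l = j := by simp only [Finset.mem_range] at hl; omega
      rw [Nat.sub_self, hp0, mul_zero]

lemma convPow_self {x : E} (hp0 : p 0 x = 0) (i : ℕ) : convPow p i x i = p 1 x ^ i := by
  induction i with
  | zero => simp [convPow]
  | succ i ih =>
    rw [convPow, Finset.sum_eq_single i, ih, Nat.add_sub_cancel_left, pow_succ]
    · intro l hl hli
      rcases lt_or_ge l i with hl' | hl'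
      · rw [convPow_eq_zero_of_lt hp0 hl', zero_mul]
      · obtain rfl : l = i + 1 := by simp only [Finset.mem_range] at hl; omega
        rw [Nat.sub_self, hp0, mul_zero]
    · simp

lemma measurable_convPow [MeasurableSpace E] (hp : ∀ i, Measurable (p i)) (i j : ℕ) :
    Measurable fun x => convPow p i x j := by
  induction i generalizing j with
  | zero => exact measurable_const
  | succ i ih => exact Finset.measurable_sum _ fun l _ => (ih l).mul (hp _)

end ConvPow

section QuenchedLaw

variable {E : Type*} (p : ℕ → E → ℝ)

def transitionProb (x : E) (i j : ℕ) : ℝ≥0∞ := ENNReal.ofReal (convPow p i x j)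

/-- `quenchedLaw p e i n j`: probability of going from `i` to `j` in `n` steps in the
environment `e`, i.e. an entry of the product of the transition matrices along `e`. -/
def quenchedLaw (e : ℕ → E) (i : ℕ) : ℕ → ℕ → ℝ≥0∞
  | 0, j => if j = i then 1 else 0
  | n + 1, j => ∑' l, quenchedLaw e i n l * transitionProb p (e n) l j

lemma quenchedLaw_one (e : ℕ → E) (i j : ℕ) :
    quenchedLaw p e i 1 j = transitionProb p (e 0) i j := by
  simp [quenchedLaw]

/-- Decomposition along the first step, whereas `quenchedLaw` is defined along the last one. -/
lemma quenchedLaw_succ' (e : ℕ → E) (i n j : ℕ) :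
    quenchedLaw p e i (n + 1) j
      = ∑' l, transitionProb p (e 0) i l * quenchedLaw p (fun t => e (t + 1)) l n j := by
  induction n generalizing j with
  | zero => simp [quenchedLaw]
  | succ n ih =>
    rw [quenchedLaw]
    simp_rw [ih, ← ENNReal.tsum_mul_right, mul_assoc]
    rw [ENNReal.tsum_comm]
    simp_rw [ENNReal.tsum_mul_left]
    rfl

lemma quenchedLaw_eq_zero_of_lt {e : ℕ → E} (hp0 : ∀ t, p 0 (e t) = 0) {i j : ℕ}
    (hji : j < i) (n : ℕ) : quenchedLaw p e i n j = 0 := by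
  induction n generalizing j with
  | zero => simp [quenchedLaw, hji.ne]
  | succ n ih =>
    refine ENNReal.tsum_eq_zero.2 fun l => ?_
    rcases lt_or_ge l i with hli | hil
    · rw [ih hli, zero_mul]
    · rw [transitionProb, convPow_eq_zero_of_lt (hp0 n) (hji.trans_le hil), ENNReal.ofReal_zero,
        mul_zero]

variable [MeasurableSpace E] {p}

lemma measurable_transitionProb (hp : ∀ i, Measurable (p i)) (i j : ℕ) :
    Measurable fun x => transitionProb p x i j :=
  ENNReal.measurable_ofReal.comp (measurable_convPow hp i j)

lemma measurable_quenchedLaw (hp : ∀ i, Measurable (p i)) (i n j : ℕ) :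
    Measurable fun e : ℕ → E => quenchedLaw p e i n j := by
  induction n generalizing j with
  | zero => exact measurable_const
  | succ n ih =>
    exact Measurable.tsum fun l =>
      (ih l).mul ((measurable_transitionProb hp l j).comp (measurable_pi_apply n))

end QuenchedLaw

lemma lintegral_comp_nat {α : Type*} [MeasurableSpace α] (μ : Measure α) {X : α → ℕ}
    (hX : Measurable X) (g : ℕ → ℝ≥0∞) :
    ∫⁻ a, g (X a) ∂μ = ∑' j, g j * μ (X ⁻¹' {j}) := by
  rw [← lintegral_map measurable_from_top hX, lintegral_countable']
  simp_rw [Measure.map_apply hX (measurableSet_singleton _)]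

lemma ENNReal.tendsto_tsum_of_monotone {ι : Type*} {a : ℕ → ι → ℝ≥0∞} {l : ι → ℝ≥0∞}
    (hmono : ∀ j, Monotone fun n => a n j)
    (hlim : ∀ j, Tendsto (fun n => a n j) atTop (𝓝 (l j))) :
    Tendsto (fun n => ∑' j, a n j) atTop (𝓝 (∑' j, l j)) := by
  let : MeasurableSpace ι := ⊤
  simp_rw [← lintegral_count]
  exact lintegral_tendsto_of_tendsto_of_monotone (fun _ => measurable_from_top.aemeasurable)
    (ae_of_all _ hmono) (ae_of_all _ hlim)

lemma monotone_div_pow_of_mul_le {x : ℕ → ℝ} {c : ℝ} (hc : 0 < c)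
    (h : ∀ n, c * x n ≤ x (n + 1)) :
    Monotone fun n => x n / c ^ n :=
  monotone_nat_of_le_succ fun n => by
    rw [pow_succ, ← div_div, le_div_iff₀ hc, div_mul_eq_mul_div, mul_comm]
    exact div_le_div_of_nonneg_right (h n) (pow_nonneg hc.le n)

namespace BPRE

variable {E : Type*} [MeasurableSpace E] (b : BPRE E)

lemma measurableSet_coord (n j : ℕ) : MeasurableSet {z : ℕ → ℕ | z n = j} :=
  measurableSet_eq_fun (measurable_pi_apply n) measurable_const

lemma K_coord_zero (k : ℕ) (e : ℕ → E) (j : ℕ) :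
    b.K k e {z | z 0 = j} = if j = k then 1 else 0 := by
  have := b.K_markov k
  split_ifs with hjk
  · exact hjk ▸ b.K_zero k e
  · refine measure_mono_null (fun z (hz : z 0 = j) (hk : z 0 = k) => hjk (hz ▸ hk)) ?_
    exact (prob_compl_eq_zero_iff (measurableSet_coord 0 k)).2 (b.K_zero k e)

lemma K_coord_eq_quenchedLaw (k : ℕ) (e : ℕ → E) (n j : ℕ) :
    b.K k e {z | z n = j} = quenchedLaw b.p e k n j := by
  induction n generalizing j with
  | zero => exact b.K_coord_zero k e j
  | succ n ih =>
    have hstep := b.K_step k e n j Set.univ MeasurableSet.univ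
    rw [Set.inter_univ, Measure.restrict_univ,
      lintegral_comp_nat _ (measurable_pi_apply n) fun l => ENNReal.ofReal (convPow b.p l (e n) j)]
      at hstep
    rw [hstep, quenchedLaw]
    exact tsum_congr fun l => by rw [mul_comm]; exact congrArg (· * _) (ih l)

lemma P_coord (k n j : ℕ) :
    b.P k {ω | ω.2 n = j} = ∫⁻ e, quenchedLaw b.p e k n j ∂b.μenv := by
  have := b.μenv_prob
  have := b.K_markov k
  rw [P, Measure.compProd_apply (s := {ω : (ℕ → E) × (ℕ → ℕ) | ω.2 n = j})
    (measurable_snd (measurableSet_coord n j))]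
  exact lintegral_congr fun e => b.K_coord_eq_quenchedLaw k e n j

lemma P_ne_top (k : ℕ) (s : Set ((ℕ → E) × (ℕ → ℕ))) : b.P k s ≠ ⊤ := by
  have := b.μenv_prob
  have := b.K_markov k
  exact measure_ne_top (μenv b ⊗ₘ K b k) s

lemma ofReal_probZ (k n j : ℕ) : ENNReal.ofReal (b.probZ k n j) = b.P k {ω | ω.2 n = j} :=
  ENNReal.ofReal_toReal (b.P_ne_top k _)

lemma lintegral_comp_coord (k n : ℕ) (g : ℕ → ℝ≥0∞) :
    ∫⁻ ω, g (ω.2 n) ∂b.P k = ∑' j, g j * ENNReal.ofReal (b.probZ k n j) := by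
  simp_rw [ofReal_probZ]
  exact lintegral_comp_nat _ ((measurable_pi_apply n).comp measurable_snd) g

lemma p_le_one (i : ℕ) (x : E) : b.p i x ≤ 1 := by
  have hs : Summable fun l => b.p l x := by
    by_contra h
    simpa [tsum_eq_zero_of_not_summable h] using b.p_tsum x
  exact b.p_tsum x ▸ hs.le_tsum i fun j _ => b.p_nonneg j x

lemma integrable_p_one_pow (k : ℕ) : Integrable (fun e : ℕ → E => b.p 1 (e 0) ^ k) b.μenv := by
  have := b.μenv_prob
  refine Integrable.of_bound
    (((b.p_meas 1).comp (measurable_pi_apply 0)).pow_const k).aestronglyMeasurable 1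
    (ae_of_all _ fun e => ?_)
  rw [Real.norm_of_nonneg (pow_nonneg (b.p_nonneg 1 _) k)]
  exact pow_le_one₀ (b.p_nonneg 1 _) (b.p_le_one 1 _)

lemma gamma_pos (h1 : 0 < b.γ 1) (k : ℕ) : 0 < b.γ k := by
  have hnonneg : ∀ k, 0 ≤ fun e : ℕ → E => b.p 1 (e 0) ^ k :=
    fun k e => pow_nonneg (b.p_nonneg 1 _) k
  rw [γ, integral_pos_iff_support_of_nonneg (hnonneg k) (b.integrable_p_one_pow k)]
  rw [γ, integral_pos_iff_support_of_nonneg (hnonneg 1) (b.integrable_p_one_pow 1)] at h1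
  refine h1.trans_le (measure_mono fun e he => ?_)
  rw [Function.mem_support, pow_one] at he
  exact pow_ne_zero k he

lemma map_shift : b.μenv.map (fun e t => e (t + 1)) = b.μenv := by
  have := b.μenv_prob
  have hshift := (b.μenv_iid.precomp Nat.succ_injective).map_fun_eq_infinitePi_map
    fun t => measurable_pi_apply (t + 1)
  have hid := b.μenv_iid.map_fun_eq_infinitePi_map measurable_pi_apply
  simp_rw [b.μenv_ident] at hshift hid
  rw [hshift, ← hid, Measure.map_id']

lemma indepFun_zero_shift :
    IndepFun (fun e : ℕ → E => e 0) (fun e t => e (t + 1)) b.μenv := by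
  let M : ℕ → MeasurableSpace (ℕ → E) := fun t => MeasurableSpace.comap (· t) inferInstance
  have h : Indep (⨆ t ∈ ({0} : Set ℕ), M t) (⨆ t ∈ ({0}ᶜ : Set ℕ), M t) b.μenv :=
    indep_iSup_of_disjoint (fun t => (measurable_pi_apply t).comap_le) b.μenv_iid.iIndep
      disjoint_compl_right
  rw [IndepFun_iff_Indep]
  refine indep_of_indep_of_le_right
    (indep_of_indep_of_le_left h (le_iSup₂ (f := fun t _ => M t) 0 rfl)) ?_
  rw [MeasurableSpace.pi, MeasurableSpace.comap_iSup]
  refine iSup_le fun t => ?_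
  rw [MeasurableSpace.comap_comp]
  exact le_iSup₂ (f := fun t _ => M t) (t + 1) (Nat.succ_ne_zero t)

lemma ae_forall_p_zero_eq_zero (hp0 : ∀ᵐ e ∂b.μenv, b.p 0 (e 0) = 0) :
    ∀ᵐ e ∂b.μenv, ∀ t, b.p 0 (e t) = 0 := by
  refine ae_all_iff.2 fun t => ?_
  have hmeas : MeasurableSet {x : E | b.p 0 x = 0} :=
    measurableSet_eq_fun (b.p_meas 0) measurable_const
  have h0 : ∀ᵐ x ∂b.ν, b.p 0 x = 0 :=
    (ae_map_iff (measurable_pi_apply 0).aemeasurable hmeas).2 hp0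
  rw [ν, ← b.μenv_ident t] at h0
  exact ae_of_ae_map (measurable_pi_apply t).aemeasurable h0

lemma probZ_eq_zero_of_lt (hp0 : ∀ᵐ e ∂b.μenv, b.p 0 (e 0) = 0) {k j : ℕ} (hjk : j < k)
    (n : ℕ) :
    b.probZ k n j = 0 := by
  rw [probZ, P_coord, lintegral_congr_ae ((b.ae_forall_p_zero_eq_zero hp0).mono fun e he =>
    quenchedLaw_eq_zero_of_lt b.p he hjk n)]
  simp

lemma toReal_lintegral_transitionProb_self (hp0 : ∀ᵐ e ∂b.μenv, b.p 0 (e 0) = 0) (k : ℕ) :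
    (∫⁻ e, transitionProb b.p (e 0) k k ∂b.μenv).toReal = b.γ k := by
  rw [γ, integral_eq_lintegral_of_nonneg_ae (ae_of_all _ fun e => pow_nonneg (b.p_nonneg 1 _) k)
    (b.integrable_p_one_pow k).aestronglyMeasurable]
  congr 1
  exact lintegral_congr_ae (hp0.mono fun e he => by simp only [transitionProb, convPow_self he])

lemma probZ_one_self (hp0 : ∀ᵐ e ∂b.μenv, b.p 0 (e 0) = 0) (k : ℕ) :
    b.probZ k 1 k = b.γ k := by
  simp_rw [probZ, P_coord, quenchedLaw_one, b.toReal_lintegral_transitionProb_self hp0]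

lemma gamma_mul_probZ_le (hp0 : ∀ᵐ e ∂b.μenv, b.p 0 (e 0) = 0) (k n j : ℕ) :
    b.γ k * b.probZ k n j ≤ b.probZ k (n + 1) j := by
  have hT : Measurable fun e : ℕ → E => transitionProb b.p (e 0) k k :=
    (measurable_transitionProb b.p_meas k k).comp (measurable_pi_apply 0)
  have hQ := measurable_quenchedLaw b.p_meas k n j
  have hshift : Measurable fun e : ℕ → E => fun t => e (t + 1) :=
    measurable_pi_lambda _ fun t => measurable_pi_apply (t + 1)
  have hsplit : ∫⁻ e, transitionProb b.p (e 0) k k * quenchedLaw b.p (fun t => e (t + 1)) k n j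
      ∂b.μenv = (∫⁻ e, transitionProb b.p (e 0) k k ∂b.μenv) * b.P k {ω | ω.2 n = j} := by
    have hstationary : ∫⁻ e, quenchedLaw b.p (fun t => e (t + 1)) k n j ∂b.μenv
        = ∫⁻ e, quenchedLaw b.p e k n j ∂b.μenv := by
      rw [← lintegral_map hQ hshift, b.map_shift]
    rw [P_coord, ← hstationary]
    exact lintegral_mul_eq_lintegral_mul_lintegral_of_indepFun'' hT.aemeasurable
      (hQ.comp hshift).aemeasurable
      (b.indepFun_zero_shift.comp (measurable_transitionProb b.p_meas k k) hQ)
  have hle : (∫⁻ e, transitionProb b.p (e 0) k k ∂b.μenv) * b.P k {ω | ω.2 n = j}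
      ≤ b.P k {ω | ω.2 (n + 1) = j} := by
    rw [← hsplit, P_coord]
    exact lintegral_mono fun e => (quenchedLaw_succ' b.p e k n j).symm ▸ ENNReal.le_tsum k
  have := ENNReal.toReal_mono (b.P_ne_top k _) hle
  rwa [ENNReal.toReal_mul, b.toReal_lintegral_transitionProb_self hp0] at this

lemma lintegral_rpow_div_eq_tsum {k : ℕ} (hγ : 0 < b.γ k) (r : ℝ) (n : ℕ) :
    (∫⁻ ω, ENNReal.ofReal ((ω.2 n : ℝ) ^ (-r)) ∂b.P k) / ENNReal.ofReal (b.γ k ^ n)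
      = ∑' j : ℕ, ENNReal.ofReal ((j : ℝ) ^ (-r) * (b.probZ k n j / b.γ k ^ n)) := by
  rw [b.lintegral_comp_coord k n fun j => ENNReal.ofReal ((j : ℝ) ^ (-r)), div_eq_mul_inv,
    ← ENNReal.tsum_mul_right]
  refine tsum_congr fun j => ?_
  rw [ENNReal.ofReal_mul (Real.rpow_nonneg (Nat.cast_nonneg j) _),
    ENNReal.ofReal_div_of_pos (pow_pos hγ n), mul_assoc, div_eq_mul_inv]

end BPRE

theorem sum_q_eq_limit_normalized_harmonic_moments_general {E : Type*} [MeasurableSpace E]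
    (b : BPRE E)
    (hstand : b.Standing) (hZ11 : 0 < b.probZ 1 1 1)
    (k : ℕ) (r : ℝ)
    (q : ℕ → ℝ)
    (hq : ∀ j, k ≤ j → Tendsto (fun n => b.probZ k n j / b.γ k ^ n) atTop (𝓝 (q j))) :
    Monotone (fun n => (∫⁻ ω, ENNReal.ofReal ((ω.2 n : ℝ) ^ (-r)) ∂b.P k)
        / ENNReal.ofReal (b.γ k ^ n)) ∧
      Tendsto (fun n => (∫⁻ ω, ENNReal.ofReal ((ω.2 n : ℝ) ^ (-r)) ∂b.P k)
          / ENNReal.ofReal (b.γ k ^ n)) atTop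
        (𝓝 (∑' j : ℕ, if k ≤ j then ENNReal.ofReal ((j : ℝ) ^ (-r) * q j) else 0)) := by
  have hp0 := hstand.2.2
  have hγ : 0 < b.γ k := b.gamma_pos (b.probZ_one_self hp0 1 ▸ hZ11) k
  have hmono : ∀ j : ℕ, Monotone fun n =>
      ENNReal.ofReal ((j : ℝ) ^ (-r) * (b.probZ k n j / b.γ k ^ n)) := fun j =>
    ENNReal.ofReal_mono.comp <| (monotone_div_pow_of_mul_le hγ
      (b.gamma_mul_probZ_le hp0 k · j)).const_mul (Real.rpow_nonneg (Nat.cast_nonneg j) _)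
  have hlim : ∀ j : ℕ,
      Tendsto (fun n => ENNReal.ofReal ((j : ℝ) ^ (-r) * (b.probZ k n j / b.γ k ^ n))) atTop
        (𝓝 (if k ≤ j then ENNReal.ofReal ((j : ℝ) ^ (-r) * q j) else 0)) := by
    intro j
    split_ifs with hkj
    · exact (ENNReal.continuous_ofReal.tendsto _).comp ((hq j hkj).const_mul _)
    · simp [b.probZ_eq_zero_of_lt hp0 (not_le.1 hkj)]
  simp_rw [b.lintegral_rpow_div_eq_tsum hγ]
  exact ⟨fun m n hmn => ENNReal.tsum_le_tsum fun j => hmono j hmn,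
    ENNReal.tendsto_tsum_of_monotone hmono hlim⟩

/-- **Normalized harmonic moments and the coefficients `q_{k,j}` (identity in `[0,∞]`).**
For a supercritical BPRE with `p₀(ξ₀) = 0` a.s. and `ℙ(Z₁ = 1 | Z₀ = 1) > 0`, fix
`k ≥ 1` and `r > 0`, and let `q j = q_{k,j} = lim_n ℙ_k(Z_n = j)/γ_k ^ n` for `j ≥ k`.
Then the sequence `n ↦ 𝔼_k[Z_n ^ (-r)]/γ_k ^ n` is nondecreasing and, as identities in
`[0,∞]`, `∑_{j ≥ k} j ^ (-r) * q_{k,j} = lim_n ↑ 𝔼_k[Z_n ^ (-r)]/γ_k ^ n`. -/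
theorem sum_q_eq_limit_normalized_harmonic_moments {E : Type*} [MeasurableSpace E]
    (b : BPRE E)
    (hstand : b.Standing) (hZ11 : 0 < b.probZ 1 1 1)
    (k : ℕ) (hk : 1 ≤ k) (r : ℝ) (hr : 0 < r)
    (q : ℕ → ℝ)
    (hq : ∀ j, k ≤ j → Tendsto (fun n => b.probZ k n j / b.γ k ^ n) atTop (𝓝 (q j))) :
    Monotone (fun n => (∫⁻ ω, ENNReal.ofReal ((ω.2 n : ℝ) ^ (-r)) ∂b.P k)
        / ENNReal.ofReal (b.γ k ^ n)) ∧
      Tendsto (fun n => (∫⁻ ω, ENNReal.ofReal ((ω.2 n : ℝ) ^ (-r)) ∂b.P k)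
          / ENNReal.ofReal (b.γ k ^ n)) atTop
        (𝓝 (∑' j : ℕ, if k ≤ j then ENNReal.ofReal ((j : ℝ) ^ (-r) * q j) else 0)) :=
  sum_q_eq_limit_normalized_harmonic_moments_general b hstand hZ11 k r q hq
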